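/- Let M be a Poisson manifold with bracket {·,·}. Then there is a unique Lie algebroid structure on T*M whose bracket on exact 1-forms satisfies [df, dg] = d{f,g} and whose anchor sends df to the Hamiltonian vector field X_f = {f,·}. The general bracket on 1-forms is given by [α,β] = L_{π♯α} β − L_{π♯β} α − d(π(α,β)), where π is the Poisson bivector and π♯: T*M → TM the associated bundle map, and this bracket satisfies the Jacobi identity (equivalently, [π,π]_{Schouten} = 0). -/

import Mathlib

/-!
For a derivation `X`, the Lie derivative `L_X (f dg) = X f dg + f d(X g)` is well defined on
Kähler differentials because the right-hand side kills the relations presenting `Ω`. The Koszul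
bracket `[α, β] = L_{π♯α} β - L_{π♯β} α - d(π(α, β))` built from it is skew and satisfies the
Leibniz rule, and the Jacobi identity for `{·,·}` says that `π♯` intertwines it with the
commutator of derivations. Consequently the Jacobiator is `S`-linear in its last slot and
alternating, so it is determined by its values on exact forms, where it is again the Jacobi
identity for `{·,·}`. Uniqueness holds because an `S`-linear anchor and a bracket that is
additive, skew and given on the generators `f dg` are determined by their values there.
-/

open scoped Manifold Derivation

noncomputable section

/-- The commutative ring of smooth real-valued functions on a manifold. -/
abbrev Cinf {E : Type*} [NormedAddCommGroup E] [NormedSpace ℝ E]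
    {H : Type*} [TopologicalSpace H] (I : ModelWithCorners ℝ E H)
    (M : Type*) [TopologicalSpace M] [ChartedSpace H M] : Type _ :=
  C^(⊤ : ℕ∞)⟮I, M; ℝ⟯

namespace KaehlerDifferential

open Finsupp

variable {R S : Type*} [CommRing R] [CommRing S] [Algebra R S]

@[elab_as_elim]
theorem induction_on {motive : Ω[S⁄R] → Prop} (ω : Ω[S⁄R]) (zero : motive 0)
    (smul_D : ∀ f g : S, motive (f • D R S g))
    (add : ∀ x y, motive x → motive y → motive (x + y)) : motive ω := by
  obtain ⟨c, rfl⟩ := linearCombination_surjective R S ω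
  induction c using Finsupp.induction_linear with
  | zero => simpa using zero
  | add c c' hc hc' => simpa using add _ _ hc hc'
  | single g f => simpa using smul_D f g

theorem eq_zero_of_skew_of_D {M : Type*} [AddCommGroup M] [Module S M]
    (J : Ω[S⁄R] → Ω[S⁄R] → Ω[S⁄R] → M)
    (add_right : ∀ α β γ γ', J α β (γ + γ') = J α β γ + J α β γ')
    (smul_right : ∀ α β γ (s : S), J α β (s • γ) = s • J α β γ)
    (swap₁₂ : ∀ α β γ, J α β γ = -J β α γ) (swap₂₃ : ∀ α β γ, J α β γ = -J α γ β)
    (D_D_D : ∀ f g h, J (D R S f) (D R S g) (D R S h) = 0) (α β γ : Ω[S⁄R]) :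
    J α β γ = 0 := by
  have of_D : ∀ α β, (∀ h, J α β (D R S h) = 0) → ∀ γ, J α β γ = 0 := by
    intro α β hD γ
    induction γ using induction_on with
    | zero => simpa using add_right α β 0 0
    | smul_D f g => rw [smul_right, hD, smul_zero]
    | add x y hx hy => rw [add_right, hx, hy, add_zero]
  have rotate : ∀ α β γ, J α β γ = J γ α β := fun α β γ => by rw [swap₂₃, swap₁₂, neg_neg]
  refine of_D α β (fun h => ?_) γ
  rw [rotate]
  refine of_D _ _ (fun k => ?_) β
  rw [rotate]
  refine of_D _ _ (fun l => ?_) α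
  rw [rotate]
  exact D_D_D l k h

/-- On the free presentation of `Ω[S⁄R]`: `∑ c_g dg ↦ ∑ X(c_g) dg + c_g d(X g)`. -/
def lieDerivFree (X : Derivation R S S) : (S →₀ S) →ₗ[R] Ω[S⁄R] :=
  (linearCombination S (D R S)).restrictScalars R ∘ₗ mapRange.linearMap X.toLinearMap
    + (linearCombination S (D R S ∘ X)).restrictScalars R

theorem lieDerivFree_single (X : Derivation R S S) (g f : S) :
    lieDerivFree X (single g f) = X f • D R S g + f • D R S (X g) := by
  simp [lieDerivFree]

theorem lieDerivFree_smul (X : Derivation R S S) (s : S) (c : S →₀ S) :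
    lieDerivFree X (s • c) = s • lieDerivFree X c + X s • linearCombination S (D R S) c := by
  induction c using Finsupp.induction_linear with
  | zero => simp
  | add c c' hc hc' => simp only [smul_add, map_add, hc, hc']; abel
  | single g f =>
    simp only [smul_single, lieDerivFree_single, smul_eq_mul, Derivation.leibniz,
      linearCombination_single]
    module

theorem lieDerivFree_eq_zero_of_mem_kerTotal (X : Derivation R S S) {c : S →₀ S}
    (hc : c ∈ kerTotal R S) : lieDerivFree X c = 0 := by
  induction hc using Submodule.span_induction with
  | mem c hc =>
    rcases hc with (⟨⟨x, y⟩, rfl⟩ | ⟨⟨x, y⟩, rfl⟩) | ⟨r, rfl⟩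
    · simp [lieDerivFree_single]
    · simp only [map_sub, map_add, lieDerivFree_single, Derivation.leibniz,
        Derivation.map_one_eq_zero, smul_eq_mul]
      module
    · simp [lieDerivFree_single]
  | zero => simp
  | add c c' _ _ hc hc' => rw [map_add, hc, hc', add_zero]
  | smul s c hc hX =>
    rw [lieDerivFree_smul, hX, LinearMap.mem_ker.mp ((kerTotal_eq R S).ge hc), smul_zero,
      smul_zero, add_zero]

def lieDeriv (X : Derivation R S S) : Ω[S⁄R] →ₗ[R] Ω[S⁄R] :=
  (LinearMap.ker ((linearCombination S (D R S)).restrictScalars R)).liftQ (lieDerivFree X)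
      (fun _ hc => lieDerivFree_eq_zero_of_mem_kerTotal X (kerTotal_eq R S ▸ hc)) ∘ₗ
    (((linearCombination S (D R S)).restrictScalars R).quotKerEquivOfSurjective
      (linearCombination_surjective R S)).symm.toLinearMap

variable (X Y : Derivation R S S)

theorem lieDeriv_linearCombination (c : S →₀ S) :
    lieDeriv X (linearCombination S (D R S) c) = lieDerivFree X c := by
  have : (((linearCombination S (D R S)).restrictScalars R).quotKerEquivOfSurjective
      (linearCombination_surjective R S)).symm (linearCombination S (D R S) c) =
      Submodule.Quotient.mk c := by
    rw [LinearEquiv.symm_apply_eq]; rfl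
  rw [lieDeriv, LinearMap.comp_apply, LinearEquiv.coe_coe, this]
  rfl

theorem lieDeriv_smul_D (f g : S) :
    lieDeriv X (f • D R S g) = X f • D R S g + f • D R S (X g) := by
  rw [← linearCombination_single, lieDeriv_linearCombination, lieDerivFree_single]

@[simp]
theorem lieDeriv_D (g : S) : lieDeriv X (D R S g) = D R S (X g) := by
  simpa using lieDeriv_smul_D X 1 g

theorem lieDeriv_smul (s : S) (ω : Ω[S⁄R]) :
    lieDeriv X (s • ω) = s • lieDeriv X ω + X s • ω := by
  obtain ⟨c, rfl⟩ := linearCombination_surjective R S ω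
  rw [← map_smul, lieDeriv_linearCombination, lieDeriv_linearCombination, lieDerivFree_smul]

theorem lieDeriv_add_derivation : lieDeriv (X + Y) = lieDeriv X + lieDeriv Y := by
  refine LinearMap.ext fun ω => ?_
  induction ω using induction_on with
  | zero => simp
  | smul_D f g =>
    simp only [LinearMap.add_apply, lieDeriv_smul_D, Derivation.add_apply, map_add]
    module
  | add x y hx hy => simp only [map_add, hx, hy, LinearMap.add_apply]

theorem lieDeriv_smul_derivation (f : S) (ω : Ω[S⁄R]) :
    lieDeriv (f • X) ω = f • lieDeriv X ω + X.liftKaehlerDifferential ω • D R S f := by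
  induction ω using induction_on with
  | zero => simp
  | smul_D h g =>
    simp only [lieDeriv_smul_D, Derivation.smul_apply, smul_eq_mul, Derivation.leibniz, map_smul,
      Derivation.liftKaehlerDifferential_comp_D]
    module
  | add x y hx hy => simp only [map_add, hx, hy, add_smul, smul_add]; abel

theorem lieDeriv_smul_derivation_of_tower (r : R) : lieDeriv (r • X) = r • lieDeriv X := by
  refine LinearMap.ext fun ω => ?_
  rw [← algebraMap_smul S r X, lieDeriv_smul_derivation, Derivation.map_algebraMap, smul_zero,
    add_zero, algebraMap_smul, LinearMap.smul_apply]

end KaehlerDifferential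

/-- A skew-symmetric biderivation of `S`, i.e. a Poisson bracket without the Jacobi identity. -/
structure AlmostPoissonBracket (R S : Type*) [CommRing R] [CommRing S] [Algebra R S] where
  bracket : S →ₗ[R] S →ₗ[R] S
  bracket_skew : ∀ f g, bracket f g = -bracket g f
  bracket_mul_right : ∀ f g h, bracket f (g * h) = bracket f g * h + g * bracket f h

namespace AlmostPoissonBracket

open KaehlerDifferential

variable {R S : Type*} [CommRing R] [CommRing S] [Algebra R S] (π : AlmostPoissonBracket R S)

def hamiltonian (f : S) : Derivation R S S :=
  Derivation.mk' (π.bracket f) fun g h => by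
    rw [π.bracket_mul_right, smul_eq_mul, smul_eq_mul]; ring

@[simp]
theorem hamiltonian_apply (f g : S) : π.hamiltonian f g = π.bracket f g := rfl

def hamiltonianDerivation : Derivation R S (Derivation R S S) :=
  Derivation.mk'
    { toFun := π.hamiltonian
      map_add' f g := by ext; simp
      map_smul' c f := by ext; simp }
    fun f g => by
      ext h
      simp only [LinearMap.coe_mk, AddHom.coe_mk, Derivation.add_apply, Derivation.smul_apply,
        hamiltonian_apply, smul_eq_mul]
      rw [π.bracket_skew, π.bracket_mul_right, π.bracket_skew h f, π.bracket_skew h g]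
      ring

/-- The anchor `π♯ : T*M → TM`. -/
def anchor : Ω[S⁄R] →ₗ[S] Derivation R S S :=
  π.hamiltonianDerivation.liftKaehlerDifferential

@[simp]
theorem anchor_D (f : S) : π.anchor (D R S f) = π.hamiltonian f :=
  Derivation.liftKaehlerDifferential_comp_D _ f

theorem anchor_D_apply (f g : S) : π.anchor (D R S f) g = π.bracket f g := by simp

theorem eq_anchor {ρ : Ω[S⁄R] →ₗ[S] Derivation R S S}
    (hρ : ∀ f g, ρ (D R S f) g = π.bracket f g) : ρ = π.anchor := by
  ext f g
  simp [hρ]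

def bivector : Ω[S⁄R] →ₗ[S] Ω[S⁄R] →ₗ[S] S :=
  (linearMapEquivDerivation R S).symm.toLinearMap ∘ₗ π.anchor

theorem bivector_apply (α β : Ω[S⁄R]) :
    π.bivector α β = (π.anchor α).liftKaehlerDifferential β := rfl

@[simp]
theorem bivector_D_D (f g : S) : π.bivector (D R S f) (D R S g) = π.bracket f g := by
  simp [bivector]

theorem bivector_skew (α β : Ω[S⁄R]) : π.bivector α β = -π.bivector β α := by
  suffices π.bivector = -π.bivector.flip from LinearMap.congr_fun₂ this α β
  ext f g
  simp [π.bracket_skew f g]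

def koszulBracket : Ω[S⁄R] →ₗ[R] Ω[S⁄R] →ₗ[R] Ω[S⁄R] :=
  LinearMap.mk₂ R
    (fun α β => lieDeriv (π.anchor α) β - lieDeriv (π.anchor β) α - D R S (π.bivector α β))
    (fun α α' β => by simp only [map_add, lieDeriv_add_derivation, LinearMap.add_apply]; abel)
    (fun r α β => by
      simp only [LinearMap.map_smul_of_tower, lieDeriv_smul_derivation_of_tower,
        LinearMap.smul_apply, Derivation.map_smul]
      module)
    (fun α β β' => by simp only [map_add, lieDeriv_add_derivation, LinearMap.add_apply]; abel)
    (fun r α β => by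
      simp only [LinearMap.map_smul_of_tower, lieDeriv_smul_derivation_of_tower,
        LinearMap.smul_apply, Derivation.map_smul]
      module)

theorem koszulBracket_apply (α β : Ω[S⁄R]) :
    π.koszulBracket α β
      = lieDeriv (π.anchor α) β - lieDeriv (π.anchor β) α - D R S (π.bivector α β) := rfl

theorem koszulBracket_skew (α β : Ω[S⁄R]) : π.koszulBracket α β = -π.koszulBracket β α := by
  rw [koszulBracket_apply, koszulBracket_apply, π.bivector_skew β α, map_neg]
  abel

theorem koszulBracket_D_D (f g : S) :
    π.koszulBracket (D R S f) (D R S g) = D R S (π.bracket f g) := by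
  rw [koszulBracket_apply, anchor_D, anchor_D, lieDeriv_D, lieDeriv_D, bivector_D_D,
    hamiltonian_apply, hamiltonian_apply, π.bracket_skew g f, map_neg]
  abel

theorem koszulBracket_smul_right (α β : Ω[S⁄R]) (s : S) :
    π.koszulBracket α (s • β) = s • π.koszulBracket α β + π.anchor α s • β := by
  simp only [koszulBracket_apply, map_smul, lieDeriv_smul, lieDeriv_smul_derivation,
    smul_eq_mul, Derivation.leibniz, ← bivector_apply]
  rw [π.bivector_skew β α]
  module

theorem koszulBracket_smul_D_smul_D (f g h k : S) :
    π.koszulBracket (f • D R S g) (h • D R S k)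
      = (f * h) • D R S (π.bracket g k) + (f * π.bracket g h) • D R S k
        - (h * π.bracket k f) • D R S g := by
  have smul_D_D : π.koszulBracket (f • D R S g) (D R S k)
      = f • D R S (π.bracket g k) - π.bracket k f • D R S g := by
    rw [koszulBracket_skew, koszulBracket_smul_right, koszulBracket_D_D, anchor_D_apply,
      π.bracket_skew k g, map_neg]
    module
  rw [koszulBracket_smul_right, smul_D_D, map_smul, Derivation.smul_apply, anchor_D_apply]
  module

theorem eq_koszulBracket {b : Ω[S⁄R] → Ω[S⁄R] → Ω[S⁄R]}
    (add_left : ∀ α α' β, b (α + α') β = b α β + b α' β) (skew : ∀ α β, b α β = -b β α)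
    (smul_D_smul_D : ∀ f g h k, b (f • D R S g) (h • D R S k)
      = (f * h) • D R S (π.bracket g k) + (f * π.bracket g h) • D R S k
        - (h * π.bracket k f) • D R S g)
    (α β : Ω[S⁄R]) : b α β = π.koszulBracket α β := by
  have zero_left (β : Ω[S⁄R]) : b 0 β = 0 := by simpa using add_left 0 0 β
  induction α using induction_on with
  | zero => rw [zero_left, map_zero, LinearMap.zero_apply]
  | add x y hx hy => rw [add_left, hx, hy, map_add, LinearMap.add_apply]
  | smul_D f g =>
    induction β using induction_on with
    | zero => rw [skew, zero_left, neg_zero, map_zero]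
    | add x y hx hy => rw [skew, add_left, neg_add, ← skew _ x, ← skew _ y, hx, hy, map_add]
    | smul_D h k => rw [smul_D_smul_D, koszulBracket_smul_D_smul_D]

section Jacobi

variable (hjac : ∀ f g h, π.bracket f (π.bracket g h)
  = π.bracket (π.bracket f g) h + π.bracket g (π.bracket f h))
include hjac

theorem hamiltonian_bracket (f g : S) :
    π.hamiltonian (π.bracket f g) = ⁅π.hamiltonian f, π.hamiltonian g⁆ := by
  ext h
  rw [Derivation.commutator_apply, hamiltonian_apply, hamiltonian_apply, hamiltonian_apply,
    hamiltonian_apply, hamiltonian_apply, hjac]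
  abel

theorem anchor_koszulBracket (α β : Ω[S⁄R]) :
    π.anchor (π.koszulBracket α β) = ⁅π.anchor α, π.anchor β⁆ := by
  induction α using induction_on with
  | zero => simp
  | add x y hx hy => rw [map_add, LinearMap.add_apply, map_add, hx, hy, map_add, add_lie]
  | smul_D f g =>
    induction β using induction_on with
    | zero => simp
    | add x y hx hy => rw [map_add, map_add, hx, hy, map_add, lie_add]
    | smul_D h k =>
      ext m
      simp only [koszulBracket_smul_D_smul_D, map_sub, map_add, map_smul, anchor_D,
        π.hamiltonian_bracket hjac, Derivation.commutator_apply, Derivation.sub_apply,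
        Derivation.add_apply, Derivation.smul_apply, hamiltonian_apply, smul_eq_mul,
        π.bracket_mul_right]
      ring

theorem koszulBracket_jacobi (α β γ : Ω[S⁄R]) :
    π.koszulBracket α (π.koszulBracket β γ)
      = π.koszulBracket (π.koszulBracket α β) γ + π.koszulBracket β (π.koszulBracket α γ) := by
  set K := π.koszulBracket
  have jacobiator_eq_zero := eq_zero_of_skew_of_D
    (fun α β γ => K α (K β γ) - K (K α β) γ - K β (K α γ))
    (fun α β γ γ' => by simp only [map_add]; abel)
    (fun α β γ s => by
      simp only [K, koszulBracket_smul_right, map_add, π.anchor_koszulBracket hjac,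
        Derivation.commutator_apply]
      module)
    (fun α β γ => by rw [π.koszulBracket_skew β α, map_neg, LinearMap.neg_apply]; abel)
    (fun α β γ => by
      rw [π.koszulBracket_skew γ β, π.koszulBracket_skew (K α γ) β,
        π.koszulBracket_skew γ (K α β), map_neg]
      abel)
    (fun f g h => by
      simp only [K, koszulBracket_D_D]
      rw [hjac, map_add]
      abel)
    α β γ
  rwa [sub_sub, sub_eq_zero] at jacobiator_eq_zero

end Jacobi

end AlmostPoissonBracket

/-- For a Poisson manifold `M` there is a unique Lie algebroid structure on the
module of 1-forms (Kähler differentials of `C^∞(M)`) with `[df, dg] = d{f,g}` and anchor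
`df ↦ X_f = {f,·}`; it satisfies the Leibniz rule, the Jacobi identity, and on generators the
bracket is given by the formula `[f dg, h dk] = fh d{g,k} + f{g,h} dk − h{k,f} dg`
(the Lie-derivative formula `[α,β] = L_{π♯α}β − L_{π♯β}α − d(π(α,β))`). -/
theorem cotangent_lie_algebroid_of_poisson
    {E : Type*} [NormedAddCommGroup E] [NormedSpace ℝ E]
    {H : Type*} [TopologicalSpace H] (I : ModelWithCorners ℝ E H)
    (M : Type*) [TopologicalSpace M] [ChartedSpace H M]
    -- a Poisson bracket on `C^∞(M)`:
    (P : Cinf I M →ₗ[ℝ] Cinf I M →ₗ[ℝ] Cinf I M)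
    (hPskew : ∀ f g, P f g = - P g f)
    (hPjac : ∀ f g h, P f (P g h) = P (P f g) h + P g (P f h))
    (hPleib : ∀ f g h, P f (g * h) = P f g * h + g * P f h) :
    ∃! bρ : (KaehlerDifferential ℝ (Cinf I M) → KaehlerDifferential ℝ (Cinf I M) →
              KaehlerDifferential ℝ (Cinf I M)) ×
            (KaehlerDifferential ℝ (Cinf I M) →ₗ[Cinf I M] Derivation ℝ (Cinf I M) (Cinf I M)),
      -- Lie bracket axioms:
      (∀ α β γ, bρ.1 (α + β) γ = bρ.1 α γ + bρ.1 β γ) ∧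
      (∀ (c : ℝ) α β, bρ.1 (c • α) β = c • bρ.1 α β) ∧
      (∀ α β, bρ.1 α β = - bρ.1 β α) ∧
      (∀ α β γ, bρ.1 α (bρ.1 β γ) = bρ.1 (bρ.1 α β) γ + bρ.1 β (bρ.1 α γ)) ∧
      -- Leibniz rule with respect to the anchor:
      (∀ α β (f : Cinf I M), bρ.1 α (f • β) = f • bρ.1 α β + (bρ.2 α f) • β) ∧
      -- the anchor sends `df` to the Hamiltonian vector field `X_f = {f,·}`:
      (∀ f g, bρ.2 (KaehlerDifferential.D ℝ (Cinf I M) f) g = P f g) ∧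
      -- the bracket on exact forms is `[df, dg] = d{f,g}`:
      (∀ f g, bρ.1 (KaehlerDifferential.D ℝ (Cinf I M) f) (KaehlerDifferential.D ℝ (Cinf I M) g)
          = KaehlerDifferential.D ℝ (Cinf I M) (P f g)) ∧
      -- the resulting formula for the bracket on generators:
      (∀ f g h k, bρ.1 (f • KaehlerDifferential.D ℝ (Cinf I M) g)
            (h • KaehlerDifferential.D ℝ (Cinf I M) k)
          = (f * h) • KaehlerDifferential.D ℝ (Cinf I M) (P g k)
            + (f * P g h) • KaehlerDifferential.D ℝ (Cinf I M) k
            - (h * P k f) • KaehlerDifferential.D ℝ (Cinf I M) g) := by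
  let π : AlmostPoissonBracket ℝ (Cinf I M) := ⟨P, hPskew, hPleib⟩
  refine ⟨(fun α β => π.koszulBracket α β, π.anchor),
    ⟨fun α β γ => LinearMap.map_add₂ _ α β γ, fun c α β => LinearMap.map_smul₂ _ c α β,
      π.koszulBracket_skew, π.koszulBracket_jacobi hPjac, π.koszulBracket_smul_right,
      π.anchor_D_apply, π.koszulBracket_D_D, π.koszulBracket_smul_D_smul_D⟩, ?_⟩
  rintro ⟨b, ρ⟩ ⟨add_left, -, skew, -, -, anchor_D, -, smul_D_smul_D⟩
  exact Prod.ext (funext₂ (π.eq_koszulBracket add_left skew smul_D_smul_D)) (π.eq_anchor anchor_D)
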